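/- arXiv:2105.00618 — 3 statements merged into one kernel-verified Lean document; each statement's English description precedes it below -/
import Mathlib

section
/- Let B ≥ 2 and let l_1, …, l_n be positive integers satisfying the Kraft inequality ∑_{i=1}^n B^{-l_i} ≤ 1. Then there exists a prefix-free code over an alphabet of B symbols consisting of n pairwise distinct codewords c_1, …, c_n with |c_i| = l_i for every i, i.e., no c_i is a prefix of c_j for i ≠ j. -/
/-!
Sort the lengths increasingly and let the `i`-th codeword be the `l i`-digit base-`B` expansion
of `N i = B ^ l i * ∑_{j < i} B ^ (-l j)`. Read a word of length `L` and value `m` as the interval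
`[m, m + 1) * B ^ (-L)`; a prefix of a word then names an enclosing interval. The codewords name
the intervals `[S i, S (i + 1))` between consecutive partial Kraft sums, which are disjoint, and
`S n ≤ 1` is exactly what gives `N i < B ^ l i`, i.e. that `N i` has at most `l i` digits.
-/

open Finset

/-- The number whose big-endian base-`B` expansion is `w`. -/
def wordValue (B : ℕ) (w : List (Fin B)) : ℕ :=
  Nat.ofDigits B (w.reverse.map Fin.val)

section wordValue

variable {B : ℕ}

lemma wordValue_append (w t : List (Fin B)) :
    wordValue B (w ++ t) = wordValue B w * B ^ t.length + wordValue B t := by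
  simp only [wordValue, List.reverse_append, List.map_append, Nat.ofDigits_append,
    List.length_map, List.length_reverse]
  ring

lemma wordValue_append_singleton (w : List (Fin B)) (d : Fin B) :
    wordValue B (w ++ [d]) = wordValue B w * B + d := by
  rw [wordValue_append, List.length_singleton, pow_one]
  simp only [wordValue, List.reverse_singleton, List.map_singleton, Nat.ofDigits_singleton]

lemma wordValue_lt_pow_length (w : List (Fin B)) : wordValue B w < B ^ w.length := by
  induction w using List.reverseRecOn with
  | nil => exact Nat.one_pos
  | append_singleton w d ih =>
    rw [wordValue_append_singleton, List.length_append, List.length_singleton, pow_succ]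
    nlinarith [d.isLt]

lemma wordValue_div_of_prefix {w w' : List (Fin B)} (h : w <+: w') :
    wordValue B w' / B ^ (w'.length - w.length) = wordValue B w := by
  obtain ⟨t, rfl⟩ := h
  have hB : 0 < B ^ t.length := (Nat.zero_le _).trans_lt (wordValue_lt_pow_length t)
  rw [List.length_append, Nat.add_sub_cancel_left, wordValue_append, Nat.mul_comm,
    Nat.mul_add_div hB, Nat.div_eq_of_lt (wordValue_lt_pow_length t), Nat.add_zero]

lemma wordValue_exists_length_eq {L m : ℕ} (hm : m < B ^ L) :
    ∃ w : List (Fin B), w.length = L ∧ wordValue B w = m := by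
  induction L generalizing m with
  | zero => exact ⟨[], rfl, by rw [pow_zero, Nat.lt_one_iff] at hm; exact hm.symm⟩
  | succ L ih =>
    have hB : 0 < B := Nat.pos_of_ne_zero (by rintro rfl; simp at hm)
    obtain ⟨w, hlen, hval⟩ := ih (Nat.div_lt_of_lt_mul (by rwa [← pow_succ']) : m / B < B ^ L)
    refine ⟨w ++ [⟨m % B, Nat.mod_lt m hB⟩], by simp [hlen], ?_⟩
    rw [wordValue_append_singleton, hval, Nat.div_add_mod']

end wordValue

/-- Equal to `B ^ l i * ∑_{j < i} B ^ (-l j)` when `l` is monotone (otherwise `l i - l j`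
truncates). -/
def kraftValue (B : ℕ) {n : ℕ} (l : Fin n → ℕ) (i : Fin n) : ℕ :=
  ∑ j ∈ Iio i, B ^ (l i - l j)

section kraftValue

variable {B n : ℕ} {l : Fin n → ℕ}

lemma kraftValue_add_one (i : Fin n) :
    kraftValue B l i + 1 = ∑ j ∈ Iic i, B ^ (l i - l j) := by
  rw [← Iio_insert, sum_insert (by simp), tsub_self, pow_zero, add_comm, kraftValue]

lemma kraftValue_add_one_mul_le (hl : Monotone l) {i j : Fin n} (hij : i < j) :
    (kraftValue B l i + 1) * B ^ (l j - l i) ≤ kraftValue B l j := by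
  calc (kraftValue B l i + 1) * B ^ (l j - l i)
      = ∑ k ∈ Iic i, B ^ (l j - l k) := by
        rw [kraftValue_add_one, sum_mul]
        refine sum_congr rfl fun k hk => ?_
        have := hl (mem_Iic.mp hk)
        have := hl hij.le
        rw [← pow_add]
        congr 1
        omega
    _ ≤ kraftValue B l j :=
        sum_le_sum_of_subset fun k hk => mem_Iio.mpr ((mem_Iic.mp hk).trans_lt hij)

lemma kraftValue_lt (hB : 0 < B) (hl : Monotone l) (hkraft : ∑ i, ((B : ℝ) ^ l i)⁻¹ ≤ 1)
    (i : Fin n) : kraftValue B l i < B ^ l i := by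
  have hB' : (B : ℝ) ≠ 0 := by positivity
  suffices ((kraftValue B l i + 1 : ℕ) : ℝ) ≤ (B : ℝ) ^ l i by exact_mod_cast this
  calc ((kraftValue B l i + 1 : ℕ) : ℝ)
      = (B : ℝ) ^ l i * ∑ j ∈ Iic i, ((B : ℝ) ^ l j)⁻¹ := by
        rw [kraftValue_add_one, Nat.cast_sum, mul_sum]
        refine sum_congr rfl fun j hj => ?_
        rw [Nat.cast_pow, pow_sub₀ _ hB' (hl (mem_Iic.mp hj))]
    _ ≤ (B : ℝ) ^ l i * 1 := by
        gcongr
        exact (sum_le_sum_of_subset_of_nonneg (subset_univ _) fun _ _ _ => by positivity).trans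
          hkraft
    _ = (B : ℝ) ^ l i := mul_one _

lemma kraftValue_div_ne (hB : 0 < B) (hl : Monotone l) {i j : Fin n} (hij : i ≠ j)
    (hlen : l i ≤ l j) : kraftValue B l j / B ^ (l j - l i) ≠ kraftValue B l i := by
  rcases hij.lt_or_gt with hij | hji
  · have := (Nat.le_div_iff_mul_le (pow_pos hB _)).mpr (kraftValue_add_one_mul_le hl hij)
    omega
  · have hlen : l i = l j := hlen.antisymm (hl hji.le)
    have := kraftValue_add_one_mul_le (B := B) hl hji
    rw [hlen, tsub_self, pow_zero, mul_one] at this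
    rw [hlen, tsub_self, pow_zero, Nat.div_one]
    omega

end kraftValue

def IsPrefixFree {ι α : Type*} (c : ι → List α) : Prop :=
  ∀ i j, i ≠ j → ¬ c i <+: c j

namespace IsPrefixFree

variable {ι κ α : Type*} {c : ι → List α}

lemma injective (hc : IsPrefixFree c) : Function.Injective c := fun i j hij =>
  by_contra fun hne => hc i j hne (hij ▸ List.prefix_refl _)

lemma comp_equiv (hc : IsPrefixFree c) (e : κ ≃ ι) : IsPrefixFree (c ∘ e) :=
  fun i j hij => hc (e i) (e j) (e.injective.ne hij)

end IsPrefixFree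

lemma exists_isPrefixFree_of_monotone {B n : ℕ} (hB : 0 < B) {l : Fin n → ℕ} (hl : Monotone l)
    (hkraft : ∑ i, ((B : ℝ) ^ l i)⁻¹ ≤ 1) :
    ∃ c : Fin n → List (Fin B), (∀ i, (c i).length = l i) ∧ IsPrefixFree c := by
  choose c hlen hval using fun i => wordValue_exists_length_eq (kraftValue_lt hB hl hkraft i)
  refine ⟨c, hlen, fun i j hij hpre => ?_⟩
  have hdiv := wordValue_div_of_prefix hpre
  rw [hlen, hlen, hval, hval] at hdiv
  exact kraftValue_div_ne hB hl hij (by simpa only [hlen] using hpre.length_le) hdiv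

theorem kraft_converse_general (B n : ℕ) (hB : 2 ≤ B) (l : Fin n → ℕ)
    (hkraft : ∑ i, ((B : ℝ) ^ l i)⁻¹ ≤ 1) :
    ∃ c : Fin n → List (Fin B), Function.Injective c ∧
      (∀ i, (c i).length = l i) ∧
      (∀ i j, i ≠ j → ¬ c i <+: c j) := by
  let σ := Tuple.sort l
  have hkraft_sorted : ∑ i, ((B : ℝ) ^ (l ∘ σ) i)⁻¹ ≤ 1 := by
    rwa [Function.comp_def, Equiv.sum_comp σ fun i => ((B : ℝ) ^ l i)⁻¹]
  obtain ⟨c, hlen, hc⟩ :=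
    exists_isPrefixFree_of_monotone (by omega) (Tuple.monotone_sort l) hkraft_sorted
  exact ⟨c ∘ σ.symm, (hc.comp_equiv σ.symm).injective,
    fun i => (hlen _).trans (congrArg l (σ.apply_symm_apply i)), hc.comp_equiv σ.symm⟩

/-- **Converse of the Kraft inequality.** If positive integer lengths `l 1, …, l n` satisfy
`∑ B^{-l i} ≤ 1` with `B ≥ 2`, then there exists a prefix-free code over an alphabet of `B`
symbols with `n` pairwise distinct codewords of exactly these lengths. -/
theorem kraft_converse (B n : ℕ) (hB : 2 ≤ B) (l : Fin n → ℕ) (hl : ∀ i, 0 < l i)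
    (hkraft : ∑ i, ((B : ℝ) ^ l i)⁻¹ ≤ 1) :
    ∃ c : Fin n → List (Fin B), Function.Injective c ∧
      (∀ i, (c i).length = l i) ∧
      (∀ i j, i ≠ j → ¬ c i <+: c j) :=
  kraft_converse_general B n hB l hkraft
end

section
/- Let B ≥ 2 and let C be a finite prefix-free code over an alphabet of B symbols with |C| = n ≥ 2 codewords that satisfies the Kraft equality ∑_{c ∈ C} B^{-|c|} = 1. Then every codeword of C has length at most (n − 1)/(B − 1). In particular, the depth of a full B-ary (Huffman) tree with n leaves is at most ⌈(n−1)/(B−1)⌉. -/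
/-!
A prefix-free code is an antichain for the prefix order `<+:`. If it satisfies the Kraft
equality it is complete: every word is comparable with some codeword, since otherwise the word
could be added to the code and the Kraft sum would exceed `1`, contradicting Kraft–McMillan.
Fix a codeword `w`. For each `k < |w|` and each letter `a ≠ w[k]`, the sibling
`w.take k ++ [a]` of the path to `w` is therefore a prefix of a codeword other than `w`. The
`|w| (B - 1)` siblings are pairwise incomparable, so these codewords are distinct, whence
`|w| (B - 1) ≤ n - 1`.
-/

open Finset

variable {α : Type*}

theorem List.take_append_singleton_prefix_iff {l : List α} {k : ℕ} (hk : k < l.length) {a : α} :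
    l.take k ++ [a] <+: l ↔ a = l[k] := by
  constructor
  · intro h
    simpa [Nat.min_eq_left hk.le] using h.getElem (i := k) (by simpa using hk.le)
  · rintro rfl
    rw [List.take_concat_get']
    exact List.take_prefix _ _

theorem List.eq_of_take_append_singleton_prefix {l : List α} {k k' : ℕ} (hk : k < l.length)
    (hk' : k' < l.length) {a a' : α} (ha : a ≠ l[k]) (h : l.take k ++ [a] <+: l.take k' ++ [a']) :
    k = k' ∧ a = a' := by
  rcases List.prefix_concat_iff.mp h with heq | hpre
  · obtain ⟨htake, ha'⟩ := List.append_inj' heq rfl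
    refine ⟨?_, List.singleton_injective ha'⟩
    simpa [hk.le, hk'.le] using congrArg List.length htake
  · exact absurd ((List.take_append_singleton_prefix_iff hk).mp
      (hpre.trans (List.take_prefix _ _))) ha

theorem IsAntichain.eq_singleton_nil {S : Set (List α)} (hS : IsAntichain (· <+: ·) S)
    (hnil : [] ∈ S) : S = {[]} :=
  Set.eq_singleton_iff_unique_mem.mpr
    ⟨hnil, fun _ hd => by_contra fun hne => hS hnil hd (Ne.symm hne) List.nil_prefix⟩

theorem IsAntichain.uniquelyDecodable {S : Set (List α)} (hS : IsAntichain (· <+: ·) S)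
    (hnil : [] ∉ S) : InformationTheory.UniquelyDecodable S := by
  intro L₁ L₂ h₁ h₂ heq
  induction L₁ generalizing L₂ with
  | nil =>
    cases L₂ with
    | nil => rfl
    | cons v L₂ =>
      simp only [List.flatten_nil, List.flatten_cons, List.nil_eq, List.append_eq_nil_iff] at heq
      exact absurd (heq.1 ▸ h₂ v List.mem_cons_self) hnil
  | cons w L₁ ih =>
    cases L₂ with
    | nil =>
      simp only [List.flatten_nil, List.flatten_cons, List.append_eq_nil_iff] at heq
      exact absurd (heq.1 ▸ h₁ w List.mem_cons_self) hnil
    | cons v L₂ =>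
      simp only [List.flatten_cons] at heq
      have hw := h₁ w List.mem_cons_self
      have hv := h₂ v List.mem_cons_self
      have hwv : w = v := by
        by_contra hne
        rcases List.prefix_or_prefix_of_prefix (List.prefix_append w L₁.flatten)
            (heq ▸ List.prefix_append v L₂.flatten) with h | h
        · exact hS hw hv hne h
        · exact hS hv hw (Ne.symm hne) h
      subst hwv
      rw [ih L₂ (fun x hx => h₁ x (List.mem_cons_of_mem w hx))
        (fun x hx => h₂ x (List.mem_cons_of_mem w hx)) (List.append_cancel_left heq)]

theorem IsAntichain.kraft_le_one [Fintype α] [Nonempty α] {S : Finset (List α)}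
    (hS : IsAntichain (· <+: ·) (S : Set (List α))) :
    ∑ v ∈ S, ((Fintype.card α : ℝ) ^ v.length)⁻¹ ≤ 1 := by
  by_cases hnil : [] ∈ S
  · rw [Finset.coe_eq_singleton.mp (hS.eq_singleton_nil hnil)]
    simp
  · simpa [one_div, inv_pow] using
      InformationTheory.kraft_mcmillan_inequality (hS.uniquelyDecodable hnil)

theorem IsAntichain.exists_prefix_or_prefix_of_kraft_eq_one [Fintype α] [Nonempty α]
    {S : Finset (List α)} (hS : IsAntichain (· <+: ·) (S : Set (List α)))
    (hK : ∑ v ∈ S, ((Fintype.card α : ℝ) ^ v.length)⁻¹ = 1) (u : List α) :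
    ∃ d ∈ S, u <+: d ∨ d <+: u := by
  classical
  by_contra! h
  have hu : u ∉ S := fun hu => (h u hu).1 (List.prefix_refl u)
  have hS' : IsAntichain (· <+: ·) ((insert u S : Finset (List α)) : Set (List α)) := by
    rw [Finset.coe_insert]
    exact hS.insert (fun d hd _ => (h d hd).2) (fun d hd _ => (h d hd).1)
  have hKu := hS'.kraft_le_one
  rw [Finset.sum_insert hu, hK] at hKu
  have : 0 < ((Fintype.card α : ℝ) ^ u.length)⁻¹ := by positivity
  linarith

theorem IsAntichain.exists_prefix_mem_erase_of_kraft_eq_one [Fintype α] [Nonempty α]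
    [DecidableEq α] {S : Finset (List α)} (hS : IsAntichain (· <+: ·) (S : Set (List α)))
    (hK : ∑ v ∈ S, ((Fintype.card α : ℝ) ^ v.length)⁻¹ = 1) {w : List α} (hw : w ∈ S)
    {k : ℕ} (hk : k < w.length) {a : α} (ha : a ≠ w[k]) :
    ∃ d ∈ S.erase w, w.take k ++ [a] <+: d := by
  obtain ⟨d, hd, hpd⟩ : ∃ d ∈ S, w.take k ++ [a] <+: d := by
    obtain ⟨d, hd, hpd | hdp⟩ := hS.exists_prefix_or_prefix_of_kraft_eq_one hK (w.take k ++ [a])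
    · exact ⟨d, hd, hpd⟩
    rcases List.prefix_concat_iff.mp hdp with rfl | hdw
    · exact ⟨_, hd, List.prefix_rfl⟩
    · refine absurd (hdw.trans (List.take_prefix _ _)) (hS hd hw fun hdc => ?_)
      have : w.length ≤ k := by simpa [hdc] using hdw.length_le
      omega
  refine ⟨d, mem_erase.mpr ⟨?_, hd⟩, hpd⟩
  rintro rfl
  exact ha ((List.take_append_singleton_prefix_iff hk).mp hpd)

theorem card_le_card_of_pairwise_not_prefix {ι : Type*} {I : Finset ι} {T : Finset (List α)}
    {p : ι → List α} (hp : (I : Set ι).Pairwise fun i j => ¬ p i <+: p j)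
    (hT : ∀ i ∈ I, ∃ d ∈ T, p i <+: d) : I.card ≤ T.card := by
  choose! f hfT hpf using hT
  refine card_le_card_of_injOn f hfT fun i hi j hj hij => by_contra fun hne => ?_
  rcases List.prefix_or_prefix_of_prefix (hpf i hi) (hij ▸ hpf j hj) with h | h
  · exact hp hi hj hne h
  · exact hp hj hi (Ne.symm hne) h

theorem card_filter_ne_getElem [Fintype α] [DecidableEq α] (w : List α) :
    (univ.filter fun q : Fin w.length × α => q.2 ≠ w[q.1]).card =
      w.length * (Fintype.card α - 1) := by
  calc _ = ∑ i : Fin w.length, (univ.filter (· ≠ w[i])).card := by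
        simp only [card_filter, Fintype.sum_prod_type]
    _ = _ := by simp [filter_ne']

theorem IsAntichain.length_mul_card_sub_one_le_of_kraft_eq_one [Fintype α] [Nonempty α]
    {S : Finset (List α)} (hS : IsAntichain (· <+: ·) (S : Set (List α)))
    (hK : ∑ v ∈ S, ((Fintype.card α : ℝ) ^ v.length)⁻¹ = 1) {w : List α} (hw : w ∈ S) :
    w.length * (Fintype.card α - 1) ≤ S.card - 1 := by
  classical
  calc w.length * (Fintype.card α - 1)
      = (univ.filter fun q : Fin w.length × α => q.2 ≠ w[q.1]).card :=
        (card_filter_ne_getElem w).symm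
    _ ≤ (S.erase w).card := by
        refine card_le_card_of_pairwise_not_prefix (p := fun q => w.take q.1 ++ [q.2])
          (fun q hq q' hq' hne h => hne ?_) fun q hq =>
            hS.exists_prefix_mem_erase_of_kraft_eq_one hK hw q.1.2 (mem_filter.mp hq).2
        obtain ⟨hk, ha⟩ := List.eq_of_take_append_singleton_prefix q.1.2 q'.1.2
          (mem_filter.mp hq).2 h
        exact Prod.ext (Fin.ext hk) ha
    _ = S.card - 1 := card_erase_of_mem hw

theorem huffman_depth_bound_general (B n : ℕ) (hB : 2 ≤ B)
    (C : Finset (List (Fin B)))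
    (hpf : ∀ c ∈ C, ∀ d ∈ C, c ≠ d → ¬ c <+: d)
    (hcard : C.card = n)
    (hkraft : ∑ c ∈ C, ((B : ℝ) ^ c.length)⁻¹ = 1) :
    ∀ c ∈ C, (c.length : ℝ) ≤ ((n : ℝ) - 1) / ((B : ℝ) - 1) ∧
      c.length ≤ ⌈((n : ℝ) - 1) / ((B : ℝ) - 1)⌉₊ := by
  have : Nonempty (Fin B) := ⟨⟨0, by omega⟩⟩
  intro c hc
  have hn : 1 ≤ n := hcard ▸ card_pos.mpr ⟨c, hc⟩
  have hlen : c.length * (B - 1) ≤ n - 1 := by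
    simpa [hcard] using
      IsAntichain.length_mul_card_sub_one_le_of_kraft_eq_one hpf (by simpa using hkraft) hc
  have hlenℝ : (c.length : ℝ) * (B - 1) ≤ n - 1 := by
    have := Nat.cast_le (α := ℝ) |>.mpr hlen
    push_cast [Nat.cast_sub (by omega : 1 ≤ B), Nat.cast_sub hn] at this
    exact this
  have hB1 : (0 : ℝ) < B - 1 := by
    have : (2 : ℝ) ≤ B := by exact_mod_cast hB
    linarith
  have hbound : (c.length : ℝ) ≤ (n - 1) / (B - 1) := (le_div_iff₀ hB1).mpr hlenℝ
  exact ⟨hbound, Nat.cast_le.mp (hbound.trans (Nat.le_ceil _))⟩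

/-- **Depth bound for full `B`-ary (Huffman) trees.** If a finite prefix-free code over an
alphabet of `B ≥ 2` symbols with `n ≥ 2` codewords satisfies the Kraft equality
`∑_{c ∈ C} B^{-|c|} = 1`, then every codeword has length at most `(n - 1)/(B - 1)`;
in particular the depth (maximum codeword length) is at most `⌈(n - 1)/(B - 1)⌉`. -/
theorem huffman_depth_bound (B n : ℕ) (hB : 2 ≤ B) (hn : 2 ≤ n)
    (C : Finset (List (Fin B)))
    (hpf : ∀ c ∈ C, ∀ d ∈ C, c ≠ d → ¬ c <+: d)
    (hcard : C.card = n)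
    (hkraft : ∑ c ∈ C, ((B : ℝ) ^ c.length)⁻¹ = 1) :
    ∀ c ∈ C, (c.length : ℝ) ≤ ((n : ℝ) - 1) / ((B : ℝ) - 1) ∧
      c.length ≤ ⌈((n : ℝ) - 1) / ((B : ℝ) - 1)⌉₊ :=
  huffman_depth_bound_general B n hB C hpf hcard hkraft
end

section
/- Let X_1, …, X_n be independent Bernoulli random variables on a probability space, where X_i takes the value 1 with probability p_i ∈ [0,1] and 0 otherwise, let λ = ∑_{i=1}^n p_i, and let Y = ∑_{i=1}^n X_i count the number of variables equal to 1. Then the distribution of Y is close to the Poisson distribution with rate λ in total variation: ∑_{k=0}^∞ | P(Y = k) − e^{−λ} λ^k / k! | ≤ 2 ∑_{i=1}^n p_i². In particular, when the p_i are small and ∑ p_i = 1, P(Y = k) is approximately e^{−1}/k!. -/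
/-!
The law of `∑ i ∈ s, X i` is the convolution of the laws of the `X i`, and by
`poissonMeasure_conv_poissonMeasure` the Poisson law of rate `∑ i ∈ s, p i` is the convolution of
the Poisson laws of rates `p i`. The `ℓ¹` distance between mass functions is subadditive under
convolution of probability measures, since `f ∗ g - f' ∗ g' = (f - f') ∗ g + f' ∗ (g - g')` and
`‖u ∗ v‖₁ ≤ ‖u‖₁ ‖v‖₁`. So it suffices to compare one Bernoulli law with the Poisson law of the
same mean, at distance `2 p (1 - e^{-p}) ≤ 2 p²`.
-/

open MeasureTheory ProbabilityTheory Finset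
open scoped NNReal

section MassFunction

variable {α : Type*} [MeasurableSpace α] [Countable α] [MeasurableSingletonClass α]

lemma hasSum_measureReal_singleton (ν : Measure α) [IsFiniteMeasure ν] :
    HasSum (fun x ↦ ν.real {x}) (ν.real Set.univ) := by
  have h : ∑' x, ν {x} = ν Set.univ := by
    rw [← tsum_univ]
    simpa using tsum_measure_preimage_singleton (μ := ν) (f := id) Set.countable_univ
      (fun _ _ ↦ measurableSet_singleton _)
  have := ENNReal.hasSum_toReal (f := fun x ↦ ν {x}) (by rw [h]; finiteness)
  rwa [← ENNReal.tsum_toReal_eq (fun _ ↦ measure_ne_top _ _), h] at this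

lemma tsum_abs_measureReal_singleton (ν : Measure α) [IsProbabilityMeasure ν] :
    ∑' x, |ν.real {x}| = 1 := by
  simp_rw [abs_of_nonneg measureReal_nonneg]
  simpa using (hasSum_measureReal_singleton ν).tsum_eq

end MassFunction

lemma measureReal_zero_add_one_add_tsum (ν : Measure ℕ) [IsProbabilityMeasure ν] :
    ν.real {0} + ν.real {1} + ∑' n, ν.real {n + 2} = 1 := by
  have h := hasSum_measureReal_singleton ν
  have h2 := h.summable.sum_add_tsum_nat_add 2
  rw [h.tsum_eq, probReal_univ] at h2
  simpa only [sum_range_succ, sum_range_zero, zero_add] using h2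

lemma measureReal_conv_singleton {M : Type*} [AddMonoid M] [HasAntidiagonal M]
    [MeasurableSpace M] [MeasurableSingletonClass M] [MeasurableAdd₂ M]
    (ν ν' : Measure M) [IsFiniteMeasure ν] [IsFiniteMeasure ν'] (n : M) :
    (ν ∗ ν').real {n} = ∑ kl ∈ antidiagonal n, ν.real {kl.1} * ν'.real {kl.2} := by
  have hpre : (fun x : M × M ↦ x.1 + x.2) ⁻¹' {n} = ↑(antidiagonal n) := by
    ext; simp
  rw [Measure.conv, map_measureReal_apply measurable_add (measurableSet_singleton n), hpre,
    ← sum_measureReal_singleton]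
  congr! 1 with kl
  rw [← Set.singleton_prod_singleton, measureReal_prod_prod]

lemma summable_abs_sum_antidiagonal {f g : ℕ → ℝ} (hf : Summable f) (hg : Summable g) :
    Summable fun n ↦ |∑ kl ∈ antidiagonal n, f kl.1 * g kl.2| :=
  summable_norm_sum_mul_antidiagonal_of_summable_norm hf.norm hg.norm

lemma tsum_abs_sum_antidiagonal_le {f g : ℕ → ℝ} (hf : Summable f) (hg : Summable g) :
    ∑' n, |∑ kl ∈ antidiagonal n, f kl.1 * g kl.2| ≤ (∑' n, |f n|) * ∑' n, |g n| := by
  have hf' : Summable fun n ↦ ‖|f n|‖ := by simpa using hf.abs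
  have hg' : Summable fun n ↦ ‖|g n|‖ := by simpa using hg.abs
  rw [tsum_mul_tsum_eq_tsum_sum_antidiagonal_of_summable_norm hf' hg']
  refine (summable_abs_sum_antidiagonal hf hg).tsum_le_tsum (fun n ↦ ?_)
    (summable_norm_sum_mul_antidiagonal_of_summable_norm hf' hg').of_norm
  refine (abs_sum_le_sum_abs _ _).trans_eq ?_
  simp only [abs_mul]

/-- Twice the total variation distance, for measures on a countable type. -/
noncomputable def pmfDist {α : Type*} [MeasurableSpace α] (ν ν' : Measure α) : ℝ :=
  ∑' x, |ν.real {x} - ν'.real {x}|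

lemma pmfDist_conv_le (ν₁ ν₂ ν₁' ν₂' : Measure ℕ) [IsProbabilityMeasure ν₁]
    [IsProbabilityMeasure ν₂] [IsProbabilityMeasure ν₁'] [IsProbabilityMeasure ν₂'] :
    pmfDist (ν₁ ∗ ν₂) (ν₁' ∗ ν₂') ≤ pmfDist ν₁ ν₁' + pmfDist ν₂ ν₂' := by
  set f₁ := fun n ↦ ν₁.real {n}
  set f₂ := fun n ↦ ν₂.real {n}
  set f₁' := fun n ↦ ν₁'.real {n}
  set f₂' := fun n ↦ ν₂'.real {n}
  have h₁ : Summable f₁ := (hasSum_measureReal_singleton ν₁).summable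
  have h₂ : Summable f₂ := (hasSum_measureReal_singleton ν₂).summable
  have h₁' : Summable f₁' := (hasSum_measureReal_singleton ν₁').summable
  have h₂' : Summable f₂' := (hasSum_measureReal_singleton ν₂').summable
  set A := fun n ↦ ∑ kl ∈ antidiagonal n, (f₁ - f₁') kl.1 * f₂ kl.2
  set B := fun n ↦ ∑ kl ∈ antidiagonal n, f₁' kl.1 * (f₂ - f₂') kl.2
  have hA : Summable fun n ↦ |A n| := summable_abs_sum_antidiagonal (h₁.sub h₁') h₂
  have hB : Summable fun n ↦ |B n| := summable_abs_sum_antidiagonal h₁' (h₂.sub h₂')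
  have hsplit : ∀ n, (ν₁ ∗ ν₂).real {n} - (ν₁' ∗ ν₂').real {n} = A n + B n := fun n ↦ by
    simp only [measureReal_conv_singleton, A, B, ← sum_sub_distrib, ← sum_add_distrib]
    refine sum_congr rfl fun _ _ ↦ ?_
    simp only [Pi.sub_apply, f₁, f₂, f₁', f₂']
    ring
  calc pmfDist (ν₁ ∗ ν₂) (ν₁' ∗ ν₂') = ∑' n, |A n + B n| := by simp only [pmfDist, hsplit]
    _ ≤ ∑' n, |A n| + ∑' n, |B n| := by
      rw [← hA.tsum_add hB]
      exact (hA.add hB).of_nonneg_of_le (fun _ ↦ abs_nonneg _) (fun _ ↦ abs_add_le _ _)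
        |>.tsum_le_tsum (fun _ ↦ abs_add_le _ _) (hA.add hB)
    _ ≤ pmfDist ν₁ ν₁' * ∑' n, |f₂ n| + (∑' n, |f₁' n|) * pmfDist ν₂ ν₂' :=
      add_le_add (tsum_abs_sum_antidiagonal_le (h₁.sub h₁') h₂)
        (tsum_abs_sum_antidiagonal_le h₁' (h₂.sub h₂'))
    _ = pmfDist ν₁ ν₁' + pmfDist ν₂ ν₂' := by
      rw [tsum_abs_measureReal_singleton ν₂, tsum_abs_measureReal_singleton ν₁', mul_one, one_mul]

lemma poissonMeasure_zero : Po(0) = Measure.dirac 0 := by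
  refine ext_iff_measureReal_singleton.2 fun n ↦ ?_
  rw [poissonMeasure_real_singleton, measureReal_def, Measure.dirac_apply]
  rcases n with _ | n <;> simp

lemma pmfDist_poissonMeasure_le_sq (ν : Measure ℕ) [IsProbabilityMeasure ν]
    (hν : ∀ n ≥ 2, ν {n} = 0) : pmfDist ν Po((ν {1}).toNNReal) ≤ 2 * ν.real {1} ^ 2 := by
  set P := Po((ν {1}).toNNReal)
  set q := ν.real {1}
  set e := Real.exp (-q)
  have hq : 0 ≤ q := measureReal_nonneg
  have hν₂ : ∀ n, ν.real {n + 2} = 0 := fun n ↦ by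
    rw [measureReal_def, hν _ (Nat.le_add_left 2 n), ENNReal.toReal_zero]
  have hν₀ : ν.real {0} = 1 - q := by
    have h := measureReal_zero_add_one_add_tsum ν
    simp only [hν₂, tsum_zero] at h
    linarith
  have hP : ∀ n, P.real {n} = e * q ^ n / n.factorial := fun n ↦ by
    rw [poissonMeasure_real_singleton, ENNReal.coe_toNNReal_eq_toReal]; rfl
  have hP₀ : P.real {0} = e := by simpa using hP 0
  have hP₁ : P.real {1} = q * e := by simpa [mul_comm] using hP 1
  have hP₂ : ∑' n, P.real {n + 2} = 1 - e - q * e := by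
    linarith [measureReal_zero_add_one_add_tsum P]
  have hsum : Summable fun n ↦ |ν.real {n} - P.real {n}| :=
    ((hasSum_measureReal_singleton ν).summable.sub (hasSum_measureReal_singleton P).summable).abs
  have he₁ : 1 - q ≤ e := by linarith [Real.add_one_le_exp (-q)]
  have he₂ : e ≤ 1 := Real.exp_le_one_iff.mpr (neg_nonpos.mpr hq)
  calc pmfDist ν P
      = |ν.real {0} - P.real {0}| + |ν.real {1} - P.real {1}| + ∑' n, P.real {n + 2} := by
        rw [pmfDist, ← hsum.sum_add_tsum_nat_add 2]
        simp only [sum_range_succ, sum_range_zero, zero_add, hν₂, zero_sub, abs_neg,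
          abs_of_nonneg, measureReal_nonneg]
    _ = (e - (1 - q)) + (q - q * e) + (1 - e - q * e) := by
        rw [hν₀, hP₀, hP₁, hP₂, abs_of_nonpos (by linarith), abs_of_nonneg (by nlinarith)]
        ring
    _ ≤ 2 * q ^ 2 := by nlinarith

theorem pmfDist_map_sum_poissonMeasure_le {Ω ι : Type*} [MeasurableSpace Ω] {μ : Measure Ω}
    [IsProbabilityMeasure μ] {X : ι → Ω → ℕ} (hmeas : ∀ i, Measurable (X i))
    (hindep : iIndepFun X μ) (hval : ∀ i ω, X i ω = 0 ∨ X i ω = 1) (s : Finset ι) :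
    pmfDist (μ.map (∑ i ∈ s, X i)) Po(∑ i ∈ s, (μ.map (X i) {1}).toNNReal) ≤
      2 * ∑ i ∈ s, (μ.map (X i)).real {1} ^ 2 := by
  classical
  induction s using Finset.induction_on with
  | empty => simp [Pi.zero_def, Measure.map_const, poissonMeasure_zero, pmfDist]
  | @insert j s hj ih =>
    have hsum : Measurable (∑ i ∈ s, X i) := by fun_prop
    have := Measure.isProbabilityMeasure_map (μ := μ) hsum.aemeasurable
    have := Measure.isProbabilityMeasure_map (μ := μ) (hmeas j).aemeasurable
    have hlaw : μ.map (∑ i ∈ insert j s, X i) = μ.map (∑ i ∈ s, X i) ∗ μ.map (X j) := by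
      rw [sum_insert hj, add_comm]
      exact (hindep.indepFun_finsetSum_of_notMem hmeas hj).map_add_eq_map_conv_map hsum (hmeas j)
    have hbern : ∀ n ≥ 2, μ.map (X j) {n} = 0 := fun n hn ↦ by
      rw [Measure.map_apply (hmeas j) (measurableSet_singleton n)]
      convert measure_empty (μ := μ)
      ext ω
      rcases hval j ω with h | h <;> simp [h] <;> omega
    calc pmfDist (μ.map (∑ i ∈ insert j s, X i)) Po(∑ i ∈ insert j s, (μ.map (X i) {1}).toNNReal)
        = pmfDist (μ.map (∑ i ∈ s, X i) ∗ μ.map (X j))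
            (Po(∑ i ∈ s, (μ.map (X i) {1}).toNNReal) ∗ Po((μ.map (X j) {1}).toNNReal)) := by
          rw [hlaw, poissonMeasure_conv_poissonMeasure, sum_insert hj, add_comm]
      _ ≤ 2 * ∑ i ∈ s, (μ.map (X i)).real {1} ^ 2 + 2 * (μ.map (X j)).real {1} ^ 2 :=
          (pmfDist_conv_le _ _ _ _).trans (add_le_add ih (pmfDist_poissonMeasure_le_sq _ hbern))
      _ = 2 * ∑ i ∈ insert j s, (μ.map (X i)).real {1} ^ 2 := by
          rw [sum_insert hj]; ring

/-- **Le Cam's inequality.** Let `X 1, …, X n` be independent Bernoulli (indicator) random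
variables, where `X i` equals `1` with probability `p i` and `0` otherwise, and let
`Y = ∑ i, X i` count the number of variables equal to `1`, `λ = ∑ i, p i`. Then the
distribution of `Y` is within total variation `2 ∑ i, (p i)^2` of the Poisson distribution
with rate `λ`:  `∑_k |P(Y = k) − e^{−λ} λ^k / k!| ≤ 2 ∑ i, (p i)²`. -/
theorem le_cam_inequality {Ω : Type*} [MeasurableSpace Ω] (μ : Measure Ω)
    [IsProbabilityMeasure μ] (n : ℕ) (X : Fin n → Ω → ℕ)
    (hmeas : ∀ i, Measurable (X i))
    (hindep : iIndepFun X μ)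
    (hval : ∀ i ω, X i ω = 0 ∨ X i ω = 1)
    (p : Fin n → ℝ)
    (hp : ∀ i, p i = (μ {ω | X i ω = 1}).toReal) :
    ∑' k : ℕ,
        |(μ {ω | ∑ i, X i ω = k}).toReal -
          Real.exp (-(∑ i, p i)) * (∑ i, p i) ^ k / (Nat.factorial k)| ≤
      2 * ∑ i, (p i) ^ 2 := by
  have hlaw : ∀ i, (μ.map (X i)).real {1} = p i := fun i ↦ by
    rw [map_measureReal_apply (hmeas i) (measurableSet_singleton 1), hp]; rfl
  have hrate : ((∑ i, (μ.map (X i) {1}).toNNReal : ℝ≥0) : ℝ) = ∑ i, p i := by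
    push_cast [ENNReal.coe_toNNReal_eq_toReal, ← measureReal_def, hlaw]
    rfl
  have hsum : Measurable (∑ i, X i) := by fun_prop
  have h := pmfDist_map_sum_poissonMeasure_le hmeas hindep hval univ
  simp only [pmfDist, hlaw, poissonMeasure_real_singleton, hrate,
    map_measureReal_apply hsum (measurableSet_singleton _)] at h
  simpa [measureReal_def, Set.preimage, Finset.sum_apply] using h
end
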